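/- arXiv:2207.00916 — 4 statements merged into one kernel-verified Lean document; each statement's English description precedes it below -/
import Mathlib

section
/- Let {A_i}_{i≥1} be an i.i.d. sequence of random variables with values in (0, 1], let a = inf(supp μ) and b = sup(supp μ) where μ is the distribution of A_1, and suppose b < e^{−e} and a ≥ G(b). Then the power towers T_n = A_1^{A_2^{⋰^{A_n}}} almost surely diverge by oscillation: almost surely the even-indexed subsequence T_{2n} and the odd-indexed subsequence T_{2n+1} each converge, but to distinct limits. -/
open MeasureTheory ProbabilityTheory Filter Set

/-- The power tower `T n = a 1 ^ (a 2 ^ (⋯ ^ (a n)))` (real exponentiation),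
with `T 0 = 1`. -/
noncomputable def tower (a : ℕ → ℝ) : ℕ → ℝ
  | 0 => 1
  | n + 1 => a 1 ^ tower (fun k => a (k + 1)) n

/-- The topological support of a measure on `ℝ`: points all of whose open
neighborhoods have positive measure. -/
def mSupport (μ : Measure ℝ) : Set ℝ :=
  {x | ∀ U : Set ℝ, IsOpen U → x ∈ U → 0 < μ U}

/-- `G b ≤ a` for `b < e^{-e}`, where `G b = exp (w * exp (-1/w))` with `w` the
unique element of `(-1, 0)` such that `w * exp w = 1 / ln b` (i.e.
`w = W(1 / ln b)` for the principal branch of the Lambert `W` function). -/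
def gLe (b a : ℝ) : Prop :=
  ∀ w ∈ Set.Ioo (-1 : ℝ) 0, w * Real.exp w = 1 / Real.log b →
    Real.exp (w * Real.exp (-1 / w)) ≤ a


/-!
Put `w = W(1 / ln b)`, `u = e^{1/w}` and `v = e^w`. Then `u < v`, `b ^ v = u` and
`G(b) ^ u = v`, so `(u, v)` is a two-cycle of the extreme maps `x ↦ b ^ x` and `x ↦ G(b) ^ x`.
Almost surely every `A_i` lies in `[a, b]` with `G(b) ≤ a`, and `x ↦ c ^ x` is antitone for
`c ∈ (0, 1]`; so an induction on `n` keeps the even towers `≥ v` and the odd towers `≤ u`, and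
the same antitonicity makes the even towers decrease and the odd towers increase. Both
subsequences therefore converge, and their limits are separated by the gap `u < v`.
-/

open Real Topology

theorem tower_succ (c : ℕ → ℝ) (n : ℕ) :
    tower c (n + 1) = c 1 ^ tower (fun k => c (k + 1)) n := rfl

section Tower

variable {c : ℕ → ℝ} {a b u v : ℝ}

theorem tower_add_two_le_of_even_of_le_of_odd (hc : ∀ i, c i ∈ Ioc 0 1) (n : ℕ) :
    (Even n → tower c (n + 2) ≤ tower c n) ∧ (Odd n → tower c n ≤ tower c (n + 2)) := by
  induction n generalizing c with
  | zero =>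
    refine ⟨fun _ => ?_, fun h => absurd h Nat.not_odd_zero⟩
    exact rpow_le_one (hc 1).1.le (hc 1).2 (rpow_nonneg (hc 2).1.le _)
  | succ n ih =>
    obtain ⟨ih_even, ih_odd⟩ := ih fun i => hc (i + 1)
    obtain ⟨h0, h1⟩ := hc 1
    refine ⟨fun hn => ?_, fun hn => ?_⟩
    · exact rpow_le_rpow_of_exponent_ge h0 h1
        (ih_odd (Nat.not_even_iff_odd.1 (Nat.even_add_one.1 hn)))
    · exact rpow_le_rpow_of_exponent_ge h0 h1
        (ih_even (Nat.not_odd_iff_even.1 (Nat.odd_add_one.1 hn)))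

theorem le_tower_of_even_of_tower_le_of_odd (ha : 0 < a) (hb : b ≤ 1)
    (hc : ∀ i, c i ∈ Icc a b) (hu : 0 ≤ u) (hv : v ∈ Icc 0 1) (hbv : b ^ v ≤ u)
    (hau : v ≤ a ^ u) (n : ℕ) :
    (Even n → v ≤ tower c n) ∧ (Odd n → tower c n ≤ u) := by
  induction n generalizing c with
  | zero => exact ⟨fun _ => hv.2, fun h => absurd h Nat.not_odd_zero⟩
  | succ n ih =>
    obtain ⟨ih_even, ih_odd⟩ := ih fun i => hc (i + 1)
    obtain ⟨hac, hcb⟩ := hc 1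
    have hc0 : 0 < c 1 := ha.trans_le hac
    have hc1 : c 1 ≤ 1 := hcb.trans hb
    rw [tower_succ]
    refine ⟨fun hn => ?_, fun hn => ?_⟩
    · calc v ≤ a ^ u := hau
        _ ≤ c 1 ^ u := rpow_le_rpow ha.le hac hu
        _ ≤ _ := rpow_le_rpow_of_exponent_ge hc0 hc1
            (ih_odd (Nat.not_even_iff_odd.1 (Nat.even_add_one.1 hn)))
    · calc _ ≤ c 1 ^ v := rpow_le_rpow_of_exponent_ge hc0 hc1
            (ih_even (Nat.not_odd_iff_even.1 (Nat.odd_add_one.1 hn)))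
        _ ≤ b ^ v := rpow_le_rpow hc0.le hcb hv.1
        _ ≤ u := hbv

end Tower

theorem exists_tendsto_even_odd_ne {f : ℕ → ℝ} {u v : ℝ}
    (h_even : ∀ n, Even n → f (n + 2) ≤ f n) (h_odd : ∀ n, Odd n → f n ≤ f (n + 2))
    (hv : ∀ n, Even n → v ≤ f n) (hu : ∀ n, Odd n → f n ≤ u) (huv : u < v) :
    ∃ L₁ L₂ : ℝ, Tendsto (fun n => f (2 * n)) atTop (𝓝 L₁) ∧
      Tendsto (fun n => f (2 * n + 1)) atTop (𝓝 L₂) ∧ L₁ ≠ L₂ := by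
  have h_anti : Antitone fun n => f (2 * n) :=
    antitone_nat_of_succ_le fun n => h_even (2 * n) (even_two_mul n)
  have h_mono : Monotone fun n => f (2 * n + 1) :=
    monotone_nat_of_le_succ fun n => h_odd (2 * n + 1) (odd_two_mul_add_one n)
  have hv' : ∀ n, v ≤ f (2 * n) := fun n => hv _ (even_two_mul n)
  have hu' : ∀ n, f (2 * n + 1) ≤ u := fun n => hu _ (odd_two_mul_add_one n)
  refine ⟨⨅ n, f (2 * n), ⨆ n, f (2 * n + 1),
    tendsto_atTop_ciInf h_anti ⟨v, forall_mem_range.2 hv'⟩,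
    tendsto_atTop_ciSup h_mono ⟨u, forall_mem_range.2 hu'⟩, ?_⟩
  exact ((ciSup_le hu').trans_lt (huv.trans_le (le_ciInf hv'))).ne'

theorem exists_mem_Ioo_mul_exp_eq {y : ℝ} (hy : y ∈ Ioo (-exp (-1)) 0) :
    ∃ w ∈ Ioo (-1 : ℝ) 0, w * exp w = y :=
  intermediate_value_Ioo (by norm_num) (by fun_prop : Continuous fun w => w * exp w).continuousOn
    (by simpa using hy)

theorem one_div_log_mem_Ioo {b : ℝ} (hb0 : 0 < b) (hb : b < exp (-exp 1)) :
    1 / log b ∈ Ioo (-exp (-1)) 0 := by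
  have hlog : log b < -exp 1 := (log_lt_iff_lt_exp hb0).2 hb
  have hneg : -exp 1 < 0 := neg_neg_of_pos (exp_pos 1)
  rw [one_div, exp_neg, ← inv_neg]
  exact ⟨(inv_lt_inv_of_neg hneg (hlog.trans hneg)).2 hlog, inv_lt_zero.2 (hlog.trans hneg)⟩

theorem exp_inv_lt_exp {w : ℝ} (hw : w ∈ Ioo (-1 : ℝ) 0) : exp w⁻¹ < exp w := by
  refine exp_lt_exp.2 (((inv_lt_of_neg hw.2 (by norm_num)).2 ?_).trans hw.1)
  simpa using hw.1

theorem rpow_exp_eq_exp_inv {b w : ℝ} (hb : 0 < b) (hw0 : w ≠ 0) (hw : w * exp w = 1 / log b) :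
    b ^ exp w = exp w⁻¹ := by
  have hlog : log b ≠ 0 := by
    rintro h
    simp [h, hw0, exp_ne_zero] at hw
  rw [rpow_def_of_pos hb]
  congr 1
  field_simp at hw ⊢
  linarith

theorem exp_mul_exp_neg_inv_rpow_exp_inv (w : ℝ) :
    exp (w * exp (-1 / w)) ^ exp w⁻¹ = exp w := by
  rw [rpow_def_of_pos (exp_pos _), log_exp, neg_div, one_div, mul_assoc, ← exp_add,
    neg_add_cancel, exp_zero, mul_one]

theorem exists_tendsto_tower_even_odd_ne_of_gLe {a b : ℝ} {c : ℕ → ℝ} (hb0 : 0 < b)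
    (hb : b < exp (-exp 1)) (ha : gLe b a) (hc : ∀ i, c i ∈ Icc a b) :
    ∃ L₁ L₂ : ℝ, Tendsto (fun n => tower c (2 * n)) atTop (𝓝 L₁) ∧
      Tendsto (fun n => tower c (2 * n + 1)) atTop (𝓝 L₂) ∧ L₁ ≠ L₂ := by
  obtain ⟨w, hw, hwb⟩ := exists_mem_Ioo_mul_exp_eq (one_div_log_mem_Ioo hb0 hb)
  have hGa := ha w hw hwb
  have ha0 : 0 < a := (exp_pos _).trans_le hGa
  have hb1 : b ≤ 1 := hb.le.trans (exp_le_one_iff.2 (neg_nonpos.2 (exp_pos 1).le))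
  have hbv : b ^ exp w ≤ exp w⁻¹ := (rpow_exp_eq_exp_inv hb0 hw.2.ne hwb).le
  have hau : exp w ≤ a ^ exp w⁻¹ := by
    rw [← exp_mul_exp_neg_inv_rpow_exp_inv w]
    exact rpow_le_rpow (exp_pos _).le hGa (exp_pos _).le
  have hv : exp w ∈ Icc 0 1 := ⟨(exp_pos w).le, exp_le_one_iff.2 hw.2.le⟩
  have hmono := tower_add_two_le_of_even_of_le_of_odd (c := c)
    fun i => ⟨ha0.trans_le (hc i).1, (hc i).2.trans hb1⟩
  have hbounds := le_tower_of_even_of_tower_le_of_odd ha0 hb1 hc (exp_pos _).le hv hbv hau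
  exact exists_tendsto_even_odd_ne (fun n => (hmono n).1) (fun n => (hmono n).2)
    (fun n => (hbounds n).1) (fun n => (hbounds n).2) (exp_inv_lt_exp hw)

theorem mSupport_eq_support (μ : Measure ℝ) : mSupport μ = μ.support := by
  rw [Measure.support_eq_forall_isOpen]
  ext x
  exact forall_congr' fun _ => forall_comm

theorem ae_mem_Icc_sInf_sSup_mSupport {μ : Measure ℝ} (hbelow : BddBelow (mSupport μ))
    (habove : BddAbove (mSupport μ)) :
    ∀ᵐ x ∂μ, x ∈ Icc (sInf (mSupport μ)) (sSup (mSupport μ)) := by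
  filter_upwards [mSupport_eq_support μ ▸ Measure.support_mem_ae] with x hx
  exact ⟨csInf_le hbelow hx, le_csSup habove hx⟩

theorem stmt_3_general {Ω : Type*} [MeasurableSpace Ω] (P : Measure Ω) [IsProbabilityMeasure P]
    (A : ℕ → Ω → ℝ)
    (hval : ∀ i, ∀ᵐ ω ∂P, A i ω ∈ Set.Ioc (0 : ℝ) 1)
    (hident : ∀ i, IdentDistrib (A i) (A 1) P P)
    (hb : sSup (mSupport (Measure.map (A 1) P)) < Real.exp (-Real.exp 1))
    (ha : gLe (sSup (mSupport (Measure.map (A 1) P)))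
      (sInf (mSupport (Measure.map (A 1) P)))) :
    ∀ᵐ ω ∂P, ∃ L₁ L₂ : ℝ,
      Tendsto (fun n => tower (fun k => A k ω) (2 * n)) atTop (nhds L₁) ∧
      Tendsto (fun n => tower (fun k => A k ω) (2 * n + 1)) atTop (nhds L₂) ∧
      L₁ ≠ L₂ := by
  set μ := Measure.map (A 1) P
  have hA1 : AEMeasurable (A 1) P := (hident 1).aemeasurable_fst
  have : IsProbabilityMeasure μ := Measure.isProbabilityMeasure_map hA1
  have h01 : ∀ᵐ x ∂μ, x ∈ Ioc (0 : ℝ) 1 := (ae_map_iff hA1 measurableSet_Ioc).2 (hval 1)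
  have hsupp : mSupport μ ⊆ Icc 0 1 := mSupport_eq_support μ ▸
    Measure.support_subset_of_isClosed isClosed_Icc (h01.mono fun _ hx => Ioc_subset_Icc_self hx)
  have hab := ae_mem_Icc_sInf_sSup_mSupport (bddBelow_Icc.mono hsupp) (bddAbove_Icc.mono hsupp)
  obtain ⟨x, hxab, hx01⟩ := (hab.and h01).exists
  have hall : ∀ᵐ ω ∂P, ∀ i, A i ω ∈ Icc (sInf (mSupport μ)) (sSup (mSupport μ)) :=
    ae_all_iff.2 fun i => (hident i).symm.ae_mem_snd measurableSet_Icc (ae_of_ae_map hA1 hab)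
  filter_upwards [hall] with ω hω
  exact exists_tendsto_tower_even_odd_ne_of_gLe (hx01.1.trans_le hxab.2) hb ha hω

theorem stmt_3 {Ω : Type*} [MeasurableSpace Ω] (P : Measure Ω) [IsProbabilityMeasure P]
    (A : ℕ → Ω → ℝ) (hmeas : ∀ i, Measurable (A i))
    (hval : ∀ i, ∀ᵐ ω ∂P, A i ω ∈ Set.Ioc (0 : ℝ) 1)
    (hindep : iIndepFun A P)
    (hident : ∀ i, IdentDistrib (A i) (A 1) P P)
    (hb : sSup (mSupport (Measure.map (A 1) P)) < Real.exp (-Real.exp 1))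
    (ha : gLe (sSup (mSupport (Measure.map (A 1) P)))
      (sInf (mSupport (Measure.map (A 1) P)))) :
    ∀ᵐ ω ∂P, ∃ L₁ L₂ : ℝ,
      Tendsto (fun n => tower (fun k => A k ω) (2 * n)) atTop (nhds L₁) ∧
      Tendsto (fun n => tower (fun k => A k ω) (2 * n + 1)) atTop (nhds L₂) ∧
      L₁ ≠ L₂ :=
  stmt_3_general P A hval hident hb ha
end

section
/- For every x ∈ (0, e^{−e}), one has 1/ln x ∈ (−1/e, 0); let w be the unique element of (−1, 0) with w·e^w = 1/ln x. Then G(x) := exp(w · exp(−1/w)) satisfies G(x) ≤ x. -/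
/-!
Put `t = -w ∈ (0, 1)`. Then `log x = 1 / (w e^w) = -e^t / t` and `w e^{-1/w} = -t e^{1/t}`, so
`G(x) ≤ x` amounts to `e^t ≤ t² e^{1/t}`, i.e. `t - 1/t ≤ 2 log t`. As `t - 1/t = 2 sinh (log t)`,
this is `sinh s ≤ s` for `s = log t ≤ 0`.
-/

open Real Set

namespace Real

theorem sub_inv_le_two_mul_log_iff {t : ℝ} (ht : 0 < t) : t - t⁻¹ ≤ 2 * log t ↔ t ≤ 1 := by
  rw [← log_nonpos_iff ht.le, ← sinh_le_self_iff, sinh_log ht]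
  constructor <;> intro h <;> linarith

theorem strictMonoOn_mul_exp : StrictMonoOn (fun w ↦ w * exp w) (Ici (-1)) := by
  refine strictMonoOn_of_deriv_pos (convex_Ici _) (by fun_prop) fun w hw ↦ ?_
  rw [interior_Ici, mem_Ioi] at hw
  have hderiv : HasDerivAt (fun w ↦ w * exp w) ((w + 1) * exp w) w :=
    ((hasDerivAt_id' w).fun_mul (hasDerivAt_exp w)).congr_deriv (by ring)
  rw [hderiv.deriv]
  exact mul_pos (by linarith) (exp_pos w)

theorem existsUnique_mul_exp_eq {y : ℝ} (hy : y ∈ Ioo (-(1 / exp 1)) 0) :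
    ∃! w : ℝ, w ∈ Ioo (-1 : ℝ) 0 ∧ w * exp w = y := by
  have hIVT := intermediate_value_Ioo (by norm_num : (-1 : ℝ) ≤ 0)
    (f := fun w ↦ w * exp w) (by fun_prop)
  simp only [exp_neg, exp_zero, zero_mul, neg_one_mul, ← one_div] at hIVT
  obtain ⟨w, hw, hwy⟩ := hIVT hy
  exact ⟨w, ⟨hw, hwy⟩, fun v ⟨hv, hvy⟩ ↦
    strictMonoOn_mul_exp.injOn hv.1.le hw.1.le (hvy.trans hwy.symm)⟩

theorem mul_exp_neg_inv_le_inv_mul_exp {w : ℝ} (hw₁ : -1 ≤ w) (hw₀ : w < 0) :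
    w * exp (-1 / w) ≤ (w * exp w)⁻¹ := by
  have hlog : -w - (-w)⁻¹ ≤ 2 * log (-w) :=
    (sub_inv_le_two_mul_log_iff (neg_pos.2 hw₀)).2 (by linarith)
  have hsq : exp (2 * log (-w)) = w ^ 2 := by
    rw [mul_comm, exp_mul, exp_log (neg_pos.2 hw₀)]; norm_num
  have key : 1 ≤ exp w * exp (-1 / w) * w ^ 2 := by
    rw [← hsq, ← exp_add, ← exp_add, one_le_exp_iff]
    have : -1 / w = -w⁻¹ := by ring
    linarith [inv_neg (a := w)]
  rw [← one_div, le_div_iff_of_neg (mul_neg_of_neg_of_pos hw₀ (exp_pos w))]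
  linarith

end Real

theorem stmt_10 (x : ℝ) (hx : x ∈ Set.Ioo 0 (Real.exp (-Real.exp 1))) :
    (1 / Real.log x ∈ Set.Ioo (-(1 / Real.exp 1)) 0) ∧
    (∃! w : ℝ, w ∈ Set.Ioo (-1 : ℝ) 0 ∧ w * Real.exp w = 1 / Real.log x) ∧
    ∀ w ∈ Set.Ioo (-1 : ℝ) 0, w * Real.exp w = 1 / Real.log x →
      Real.exp (w * Real.exp (-1 / w)) ≤ x := by
  obtain ⟨hx₀, hx₁⟩ := hx
  have hlog : log x < -exp 1 := by simpa using log_lt_log hx₀ hx₁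
  have hrange : 1 / log x ∈ Ioo (-(1 / exp 1)) 0 := by
    refine ⟨?_, one_div_neg.2 (by linarith [exp_pos 1])⟩
    rw [← one_div_neg_eq_neg_one_div]
    exact one_div_lt_one_div_of_neg_of_lt (by linarith [exp_pos 1]) hlog
  refine ⟨hrange, existsUnique_mul_exp_eq hrange, fun w hw hwx ↦ ?_⟩
  have hlogx : log x = (w * exp w)⁻¹ := by rw [hwx, one_div, inv_inv]
  rw [← exp_log hx₀, exp_le_exp, hlogx]
  exact mul_exp_neg_inv_le_inv_mul_exp hw.1.le hw.2
end

section
/- If U, V, W are independent random variables, each uniformly distributed on (0, 1), then (UV)^W is also uniformly distributed on (0, 1); that is, (UV)^W has the same distribution as W. -/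
/-! Put `X = UV`. For `0 < y < 1`, `P(X ≤ y) = ∫₀¹ min(1, y/u) du = y - y log y`.
Given `W = w ∈ (0,1)`, `X ^ w ≤ x` iff `X ≤ x ^ (1/w)`, so
`P((UV) ^ W ≤ x) = ∫₀¹ x ^ (1/w) (1 - log x / w) dw`. The integrand is the derivative of
`w ↦ w x ^ (1/w)`, which tends to `0` as `w → 0` and equals `x` at `w = 1`; hence the integral
is `x`. -/

open MeasureTheory ProbabilityTheory Set Filter Topology
open scoped ENNReal

theorem lintegral_Ioo_ofReal_eq_sub_of_hasDerivAt {f F : ℝ → ℝ} {a b : ℝ} (hab : a ≤ b)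
    (hF : ContinuousOn F (Icc a b)) (hderiv : ∀ x ∈ Ioo a b, HasDerivAt F (f x) x)
    (hf : ∀ x ∈ Ioo a b, 0 ≤ f x) :
    ∫⁻ x in Ioo a b, ENNReal.ofReal (f x) = ENNReal.ofReal (F b - F a) := by
  have hint : IntegrableOn f (Ioc a b) :=
    intervalIntegral.integrableOn_deriv_of_nonneg hF hderiv hf
  rw [← ofReal_integral_eq_lintegral_ofReal (hint.mono_set Ioo_subset_Ioc_self)
      (ae_restrict_of_forall_mem measurableSet_Ioo hf), ← integral_Ioc_eq_integral_Ioo,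
    ← intervalIntegral.integral_of_le hab,
    intervalIntegral.integral_eq_sub_of_hasDerivAt_of_le hab hF hderiv
      ((intervalIntegrable_iff_integrableOn_Ioc_of_le hab).2 hint)]

theorem hasDerivAt_mul_rpow_inv {x w : ℝ} (hx : 0 < x) (hw : w ≠ 0) :
    HasDerivAt (fun t => t * x ^ t⁻¹) (x ^ w⁻¹ * (1 - Real.log x / w)) w := by
  refine HasDerivAt.congr_deriv (f' := 1 * x ^ w⁻¹ + w * (Real.log x * -(w ^ 2)⁻¹ * x ^ w⁻¹))
    ((hasDerivAt_id' w).mul ((hasDerivAt_inv hw).const_rpow hx)) ?_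
  field_simp
  ring

theorem continuousOn_mul_rpow_inv {x : ℝ} (hx₀ : 0 < x) (hx₁ : x ≤ 1) :
    ContinuousOn (fun t => t * x ^ t⁻¹) (Ici 0) := by
  intro t (ht : 0 ≤ t)
  rcases ht.eq_or_lt with rfl | ht
  · -- The value at `0` is `0 * x ^ 0⁻¹ = 0`, the limit of the squeeze `0 ≤ t * x ^ t⁻¹ ≤ t`.
    have hsq : Tendsto (fun t : ℝ => t * x ^ t⁻¹) (𝓝[Ici 0] 0) (𝓝 0) := by
      refine squeeze_zero' ?_ ?_ (tendsto_id.mono_left nhdsWithin_le_nhds)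
      · filter_upwards [self_mem_nhdsWithin] with t (ht : 0 ≤ t)
        exact mul_nonneg ht (Real.rpow_nonneg hx₀.le _)
      · filter_upwards [self_mem_nhdsWithin] with t (ht : 0 ≤ t)
        exact mul_le_of_le_one_right ht (Real.rpow_le_one hx₀.le hx₁ (inv_nonneg.2 ht))
    simpa [ContinuousWithinAt] using hsq
  · exact (continuousAt_id.mul ((Real.continuousAt_const_rpow hx₀.ne').comp
      (continuousAt_inv₀ ht.ne'))).continuousWithinAt

theorem ProbabilityTheory.IndepFun.map_eq_map_prod_map_map {Ω α β γ : Type*}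
    [MeasurableSpace Ω] [MeasurableSpace α] [MeasurableSpace β] [MeasurableSpace γ] {P : Measure Ω}
    [IsFiniteMeasure P] {X : Ω → α} {Y : Ω → β} (hXY : IndepFun X Y P) (hX : Measurable X)
    (hY : Measurable Y) {g : α × β → γ} (hg : Measurable g) :
    P.map (fun ω => g (X ω, Y ω)) = ((P.map X).prod (P.map Y)).map g := by
  rw [← hXY.map_prod_eq_prod_map_map hX.aemeasurable hY.aemeasurable,
    Measure.map_map hg (hX.prodMk hY)]
  rfl

local notation "𝕌" => volume.restrict (Ioo (0 : ℝ) 1)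

instance : IsProbabilityMeasure 𝕌 :=
  ⟨by rw [Measure.restrict_apply_univ, Real.volume_Ioo, sub_zero, ENNReal.ofReal_one]⟩

theorem uniform_Ioc_zero (t : ℝ) : 𝕌 (Ioc 0 t) = ENNReal.ofReal (min t 1) := by
  rw [Measure.restrict_congr_set Ioo_ae_eq_Ioc, Measure.restrict_apply measurableSet_Ioc,
    Ioc_inter_Ioc, Real.volume_Ioc, max_self, sub_zero]

theorem preimage_mul_left_Ioc_zero {u : ℝ} (hu : 0 < u) (y : ℝ) :
    (u * ·) ⁻¹' Ioc 0 y = Ioc 0 (y / u) := by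
  ext v
  simp [mul_pos_iff_of_pos_left hu, le_div_iff₀ hu, mul_comm]

theorem ae_prod_uniform_map_mul_mem_Ioo :
    ∀ᵐ s ∂(Measure.prod 𝕌 𝕌).map (fun p => p.1 * p.2), s ∈ Ioo (0 : ℝ) 1 := by
  refine (ae_map_iff (by fun_prop) measurableSet_Ioo).2 ?_
  filter_upwards [Measure.quasiMeasurePreserving_fst.ae (ae_restrict_mem measurableSet_Ioo),
    Measure.quasiMeasurePreserving_snd.ae (ae_restrict_mem measurableSet_Ioo)] with p hu hv
  exact ⟨mul_pos hu.1 hv.1, mul_lt_one_of_nonneg_of_lt_one_left hu.1.le hu.2 hv.2.le⟩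

theorem eq_uniform_of_forall_Ioc {ν : Measure ℝ} [IsProbabilityMeasure ν]
    (hν : ∀ᵐ s ∂ν, s ∈ Ioo (0 : ℝ) 1)
    (hcdf : ∀ x ∈ Ioo (0 : ℝ) 1, ν (Ioc 0 x) = ENNReal.ofReal x) : ν = 𝕌 := by
  refine Measure.ext_of_Iic _ _ fun x => ?_
  rw [← Measure.restrict_eq_self_of_ae_mem hν, Measure.restrict_apply measurableSet_Iic,
    Measure.restrict_apply measurableSet_Iic]
  rcases le_or_gt x 0 with hx₀ | hx₀
  · have hempty : Iic x ∩ Ioo 0 1 = ∅ :=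
      eq_empty_of_forall_notMem fun s hs => (hx₀.trans_lt hs.2.1).not_ge hs.1
    simp [hempty]
  rcases lt_or_ge x 1 with hx₁ | hx₁
  · have hIoc : Iic x ∩ Ioo 0 1 = Ioc 0 x := by
      ext s
      constructor
      · rintro ⟨hsx, hs₀, -⟩
        exact ⟨hs₀, hsx⟩
      · rintro ⟨hs₀, hsx⟩
        exact ⟨hsx, hs₀, hsx.trans_lt hx₁⟩
    rw [hIoc, hcdf x ⟨hx₀, hx₁⟩, Real.volume_Ioc, sub_zero]
  · have hν₁ : ν (Ioo 0 1) = 1 := by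
      rw [← prob_compl_eq_zero_iff measurableSet_Ioo]
      exact hν
    have hsub : Ioo (0 : ℝ) 1 ⊆ Iic x :=
      Ioo_subset_Ioc_self.trans (Ioc_subset_Iic_self.trans (Iic_subset_Iic.2 hx₁))
    rw [inter_eq_self_of_subset_right hsub, hν₁, Real.volume_Ioo, sub_zero, ENNReal.ofReal_one]

theorem prod_uniform_map_mul_Ioc {y : ℝ} (hy : y ∈ Ioo (0 : ℝ) 1) :
    (Measure.prod 𝕌 𝕌).map (fun p => p.1 * p.2) (Ioc 0 y) =
      ENNReal.ofReal (y - y * Real.log y) := by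
  have hmul : Measurable (fun p : ℝ × ℝ => p.1 * p.2) := by fun_prop
  have hslice : ∀ u ∈ Ioo (0 : ℝ) 1,
      𝕌 (Prod.mk u ⁻¹' ((fun p : ℝ × ℝ => p.1 * p.2) ⁻¹' Ioc 0 y)) =
        ENNReal.ofReal (min (y / u) 1) := fun u hu => by
    rw [← uniform_Ioc_zero, ← preimage_mul_left_Ioc_zero hu.1]
    rfl
  have hsmall : ∫⁻ u in Ioc 0 y, ENNReal.ofReal (min (y / u) 1) = ENNReal.ofReal y := by
    rw [setLIntegral_congr_fun measurableSet_Ioc fun u hu =>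
        congrArg ENNReal.ofReal (min_eq_right ((one_le_div hu.1).2 hu.2)),
      ENNReal.ofReal_one, setLIntegral_one, Real.volume_Ioc, sub_zero]
  have hlarge : ∫⁻ u in Ioo y 1, ENNReal.ofReal (min (y / u) 1) =
      ENNReal.ofReal (y * Real.log 1 - y * Real.log y) := by
    have hu₀ : ∀ u ∈ Icc y 1, u ≠ 0 := fun u hu => (hy.1.trans_le hu.1).ne'
    rw [setLIntegral_congr_fun measurableSet_Ioo fun u hu =>
        congrArg ENNReal.ofReal ((min_eq_left ((div_le_one (hy.1.trans hu.1)).2 hu.1.le)).trans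
          (div_eq_mul_inv y u))]
    exact lintegral_Ioo_ofReal_eq_sub_of_hasDerivAt hy.2.le
      (continuousOn_const.mul (Real.continuousOn_log.mono fun u hu => hu₀ u hu))
      (fun u hu => (Real.hasDerivAt_log (hu₀ u (Ioo_subset_Icc_self hu))).const_mul y)
      (fun u hu => mul_nonneg hy.1.le (inv_nonneg.2 (hy.1.trans hu.1).le))
  rw [Measure.map_apply hmul measurableSet_Ioc, Measure.prod_apply (hmul measurableSet_Ioc),
    setLIntegral_congr_fun measurableSet_Ioo hslice, ← Ioc_union_Ioo_eq_Ioo hy.1.le hy.2,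
    lintegral_union measurableSet_Ioo (Ioc_disjoint_Ioi_same.mono_right Ioo_subset_Ioi_self),
    hsmall, hlarge, Real.log_one, mul_zero, zero_sub, ← ENNReal.ofReal_add hy.1.le
      (neg_nonneg.2 (mul_nonpos_of_nonneg_of_nonpos hy.1.le (Real.log_nonpos hy.1.le hy.2.le))),
    sub_eq_add_neg]

theorem prod_map_rpow_eq_uniform {ρ : Measure ℝ} [IsProbabilityMeasure ρ]
    (hρ : ∀ᵐ s ∂ρ, s ∈ Ioo (0 : ℝ) 1)
    (hcdf : ∀ y ∈ Ioo (0 : ℝ) 1, ρ (Ioc 0 y) = ENNReal.ofReal (y - y * Real.log y)) :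
    (Measure.prod 𝕌 ρ).map (fun p => p.2 ^ p.1) = 𝕌 := by
  have hpow : Measurable (fun p : ℝ × ℝ => p.2 ^ p.1) := by fun_prop
  have := Measure.isProbabilityMeasure_map (μ := Measure.prod 𝕌 ρ) hpow.aemeasurable
  refine eq_uniform_of_forall_Ioc ?_ fun x hx => ?_
  · refine (ae_map_iff hpow.aemeasurable measurableSet_Ioo).2 ?_
    filter_upwards [Measure.quasiMeasurePreserving_fst.ae (ae_restrict_mem measurableSet_Ioo),
      Measure.quasiMeasurePreserving_snd.ae hρ] with p hw hs
    exact ⟨Real.rpow_pos_of_pos hs.1 _, Real.rpow_lt_one hs.1.le hs.2 hw.1⟩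
  have hslice : ∀ w ∈ Ioo (0 : ℝ) 1,
      ρ (Prod.mk w ⁻¹' ((fun p : ℝ × ℝ => p.2 ^ p.1) ⁻¹' Ioc 0 x)) =
        ENNReal.ofReal (x ^ w⁻¹ * (1 - Real.log x / w)) := by
    intro w hw
    have hxw : x ^ w⁻¹ ∈ Ioo (0 : ℝ) 1 :=
      ⟨Real.rpow_pos_of_pos hx.1 _, Real.rpow_lt_one hx.1.le hx.2 (inv_pos.2 hw.1)⟩
    have hset : Prod.mk w ⁻¹' ((fun p : ℝ × ℝ => p.2 ^ p.1) ⁻¹' Ioc 0 x) ∩ Ioo 0 1 =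
        Ioc 0 (x ^ w⁻¹) := by
      ext s
      simp only [mem_inter_iff, mem_preimage, mem_Ioc, mem_Ioo]
      constructor
      · rintro ⟨⟨-, hsx⟩, hs₀, -⟩
        exact ⟨hs₀, (Real.le_rpow_inv_iff_of_pos hs₀.le hx.1.le hw.1).2 hsx⟩
      · rintro ⟨hs₀, hsx⟩
        exact ⟨⟨Real.rpow_pos_of_pos hs₀ _,
          (Real.le_rpow_inv_iff_of_pos hs₀.le hx.1.le hw.1).1 hsx⟩, hs₀, hsx.trans_lt hxw.2⟩
    rw [← Measure.restrict_eq_self_of_ae_mem hρ, Measure.restrict_apply' measurableSet_Ioo, hset,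
      hcdf _ hxw, Real.log_rpow hx.1]
    congr 1
    field_simp
  have hnonneg : ∀ w ∈ Ioo (0 : ℝ) 1, 0 ≤ x ^ w⁻¹ * (1 - Real.log x / w) := fun w hw =>
    mul_nonneg (Real.rpow_nonneg hx.1.le _) (sub_nonneg.2 ((div_nonpos_of_nonpos_of_nonneg
      (Real.log_nonpos hx.1.le hx.2.le) hw.1.le).trans zero_le_one))
  rw [Measure.map_apply hpow measurableSet_Ioc, Measure.prod_apply (hpow measurableSet_Ioc),
    setLIntegral_congr_fun measurableSet_Ioo hslice,
    lintegral_Ioo_ofReal_eq_sub_of_hasDerivAt zero_le_one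
      ((continuousOn_mul_rpow_inv hx.1 hx.2.le).mono Icc_subset_Ici_self)
      (fun w hw => hasDerivAt_mul_rpow_inv hx.1 hw.1.ne') hnonneg]
  simp

theorem stmt_13 {Ω : Type*} [MeasurableSpace Ω] (P : Measure Ω) [IsProbabilityMeasure P]
    (U V W : Ω → ℝ) (hU : Measurable U) (hV : Measurable V) (hW : Measurable W)
    (hindep : iIndepFun ![U, V, W] P)
    (hUunif : Measure.map U P = volume.restrict (Set.Ioo (0 : ℝ) 1))
    (hVunif : Measure.map V P = volume.restrict (Set.Ioo (0 : ℝ) 1))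
    (hWunif : Measure.map W P = volume.restrict (Set.Ioo (0 : ℝ) 1)) :
    Measure.map (fun ω => (U ω * V ω) ^ W ω) P = Measure.map W P := by
  have hUV : IndepFun U V P := hindep.indepFun (i := 0) (j := 1) (by decide)
  have hUVW : IndepFun (fun ω => U ω * V ω) W P :=
    hindep.indepFun_mul_left (fun i => by fin_cases i <;> assumption) 0 1 2 (by decide) (by decide)
  have hlawUV : P.map (fun ω => U ω * V ω) = (Measure.prod 𝕌 𝕌).map (fun p => p.1 * p.2) := by
    rw [hUV.map_eq_map_prod_map_map hU hV (g := fun p => p.1 * p.2) (by fun_prop), hUunif,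
      hVunif]
  have := Measure.isProbabilityMeasure_map (μ := P) (hU.mul hV).aemeasurable
  rw [hUVW.symm.map_eq_map_prod_map_map hW (hU.mul hV) (g := fun p => p.2 ^ p.1) (by fun_prop),
    hWunif]
  exact prod_map_rpow_eq_uniform (hlawUV ▸ ae_prod_uniform_map_mul_mem_Ioo)
    fun y hy => hlawUV ▸ prod_uniform_map_mul_Ioc hy
end

section
/- Let r ∈ (0, 1) and let U, V_1, V_2, V_3 be independent random variables, each uniformly distributed on (0, 1). Set T = U^r and A = max(V_1^{r/(1−r)}, V_2 V_3). Then A^T has the same distribution as T; that is, the inverse tower distribution of U^r is the distribution of max(V_1^{r/(1−r)}, V_2 V_3). -/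
/-!
Write `T = U ^ r` and `A = max (V₁ ^ (r / (1 - r))) (V₂ V₃)`. On `(0, 1)`, `P(T ≤ t) = t ^ (1/r)`;
the independent variables `V₁ ^ (r / (1 - r))` and `V₂ V₃` have distribution functions
`c ^ (1/r - 1)` and `c - c log c` there, so `P(A ≤ c) = c ^ (1/r) (1 - log c)`. Since `A` is
independent of `U`,
`P(A ^ T ≤ t) = ∫₀¹ P(A ≤ t ^ u ^ (-r)) du = ∫₀¹ t ^ (u ^ (-r) / r) (1 - u ^ (-r) log t) du`,
and the integrand is the derivative of `u ↦ u t ^ (u ^ (-r) / r)`, which is `0` at `0` and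
`t ^ (1/r)` at `1`. Both laws live on `(0, 1)`, so equal distribution functions there suffice.
-/

open MeasureTheory ProbabilityTheory Set Real Filter

lemma MeasureTheory.Measure.ext_of_Iic_of_ae_mem_Ioo {μ ν : Measure ℝ} [IsProbabilityMeasure μ]
    [IsProbabilityMeasure ν] {a b : ℝ} (hμ : ∀ᵐ x ∂μ, x ∈ Ioo a b) (hν : ∀ᵐ x ∂ν, x ∈ Ioo a b)
    (h : ∀ t ∈ Ioo a b, μ (Iic t) = ν (Iic t)) : μ = ν := by
  refine Measure.ext_of_Iic μ ν fun t => ?_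
  rcases le_or_gt t a with hta | hat
  · have hnull (m : Measure ℝ) (hm : ∀ᵐ x ∂m, x ∈ Ioo a b) : m (Iic t) = 0 :=
      measure_eq_zero_iff_ae_notMem.2 <| hm.mono fun x hx hxt => (hxt.trans hta).not_gt hx.1
    rw [hnull μ hμ, hnull ν hν]
  rcases lt_or_ge t b with htb | hbt
  · exact h t ⟨hat, htb⟩
  · have hfull (m : Measure ℝ) [IsProbabilityMeasure m] (hm : ∀ᵐ x ∂m, x ∈ Ioo a b) :
        m (Iic t) = 1 := by
      have hIic : Iic t =ᵐ[m] univ :=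
        Filter.eventuallyEq_univ.2 (hm.mono fun x hx => (hx.2.trans_le hbt).le)
      rw [measure_congr hIic, measure_univ]
    rw [hfull μ hμ, hfull ν hν]

lemma volume_restrict_Ioo_mul_le {x : ℝ} (a : ℝ) (hx : 0 < x) :
    volume.restrict (Ioo 0 1) {y : ℝ | x * y ≤ a} = ENNReal.ofReal (min (a / x) 1) := by
  have hset : {y : ℝ | x * y ≤ a} = Iic (a / x) := by ext y; simp [le_div_iff₀' hx]
  rw [Measure.restrict_congr_set Ioo_ae_eq_Ioc, hset, Measure.restrict_apply measurableSet_Iic,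
    inter_comm, Ioc_inter_Iic, volume_Ioc, sub_zero, min_comm]

lemma lintegral_Ioo_min_div_one {a : ℝ} (ha₀ : 0 < a) (ha₁ : a ≤ 1) :
    ∫⁻ x in Ioo 0 1, ENNReal.ofReal (min (a / x) 1) = ENNReal.ofReal (a - a * log a) := by
  have hlow : EqOn (fun x => min (a / x) 1) (fun _ => 1) (uIoo 0 a) := fun x hx => by
    rw [uIoo_of_le ha₀.le] at hx
    exact min_eq_right ((one_le_div hx.1).2 hx.2.le)
  have hhigh : EqOn (fun x => min (a / x) 1) (fun x => a * x⁻¹) (uIoo a 1) := fun x hx => by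
    rw [uIoo_of_le ha₁] at hx
    exact (min_eq_left ((div_le_one (ha₀.trans hx.1)).2 hx.1.le)).trans (div_eq_mul_inv a x)
  have hint_low : IntervalIntegrable (fun x => min (a / x) 1) volume 0 a :=
    (intervalIntegrable_congr_uIoo hlow).2 intervalIntegrable_const
  have hint_high : IntervalIntegrable (fun x => min (a / x) 1) volume a 1 := by
    refine (intervalIntegrable_congr_uIoo hhigh).2 (IntervalIntegrable.const_mul ?_ a)
    exact intervalIntegral.intervalIntegrable_inv (fun x hx => by
      rw [uIcc_of_le ha₁] at hx; exact (ha₀.trans_le hx.1).ne') continuousOn_id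
  have hint := hint_low.trans hint_high
  rw [← ofReal_integral_eq_lintegral_ofReal
      (hint.1.mono_set Ioo_subset_Ioc_self)
      ((ae_restrict_iff' measurableSet_Ioo).2 (ae_of_all _ fun x hx =>
        le_min (div_nonneg ha₀.le hx.1.le) zero_le_one)),
    ← integral_Ioc_eq_integral_Ioo, ← intervalIntegral.integral_of_le zero_le_one,
    ← intervalIntegral.integral_add_adjacent_intervals hint_low hint_high,
    intervalIntegral.integral_congr_uIoo hlow, intervalIntegral.integral_congr_uIoo hhigh,
    intervalIntegral.integral_const_mul, integral_inv_of_pos ha₀ one_pos, one_div, log_inv]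
  simp only [intervalIntegral.integral_const, sub_zero, smul_eq_mul, mul_one]
  congr 1
  ring

lemma hasDerivAt_mul_rpow_inv_rpow {t r u : ℝ} (ht : 0 < t) (hr : r ≠ 0) (hu : 0 < u) :
    HasDerivAt (fun u => u * t ^ ((u ^ r)⁻¹ * r⁻¹))
      (t ^ ((u ^ r)⁻¹ * r⁻¹) * (1 - (u ^ r)⁻¹ * log t)) u := by
  have hur : 0 < u ^ r := rpow_pos_of_pos hu r
  have hexp : HasDerivAt (fun u => (u ^ r)⁻¹ * r⁻¹) (-(u ^ r)⁻¹ / u) u := by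
    refine (((hasDerivAt_rpow_const (Or.inl hu.ne')).inv hur.ne').mul_const r⁻¹).congr_deriv ?_
    rw [rpow_sub_one hu.ne']
    field_simp
  refine ((hasDerivAt_id u).mul
    ((hasStrictDerivAt_const_rpow ht _).hasDerivAt.comp u hexp)).congr_deriv ?_
  simp only [id, Function.comp_def]
  field_simp
  ring

lemma continuousOn_mul_rpow_inv_rpow {t r : ℝ} (ht₀ : 0 < t) (ht₁ : t ≤ 1) (hr : 0 < r) :
    ContinuousOn (fun u => u * t ^ ((u ^ r)⁻¹ * r⁻¹)) (Icc 0 1) := by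
  intro u hu
  rcases hu.1.eq_or_lt with rfl | hu₀
  · have hle (v : ℝ) (hv : v ∈ Icc (0:ℝ) 1) : t ^ ((v ^ r)⁻¹ * r⁻¹) ≤ 1 :=
      rpow_le_one ht₀.le ht₁ (mul_nonneg (inv_nonneg.2 (rpow_nonneg hv.1 r)) (inv_nonneg.2 hr.le))
    rw [ContinuousWithinAt, zero_mul]
    refine squeeze_zero' ?_ ?_ (tendsto_nhdsWithin_of_tendsto_nhds tendsto_id)
    · filter_upwards [self_mem_nhdsWithin] with v hv
      exact mul_nonneg hv.1 (rpow_nonneg ht₀.le _)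
    · filter_upwards [self_mem_nhdsWithin] with v hv
      exact mul_le_of_le_one_right hv.1 (hle v hv)
  · exact (hasDerivAt_mul_rpow_inv_rpow ht₀ hr.ne' hu₀).continuousAt.continuousWithinAt

lemma lintegral_Ioo_rpow_inv_rpow {t r : ℝ} (ht₀ : 0 < t) (ht₁ : t ≤ 1) (hr : 0 < r) :
    ∫⁻ u in Ioo 0 1, ENNReal.ofReal (t ^ ((u ^ r)⁻¹ * r⁻¹) * (1 - (u ^ r)⁻¹ * log t)) =
      ENNReal.ofReal (t ^ r⁻¹) := by
  have hderiv (u : ℝ) (hu : u ∈ Ioo (0:ℝ) 1) := hasDerivAt_mul_rpow_inv_rpow ht₀ hr.ne' hu.1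
  have hnonneg (u : ℝ) (hu : u ∈ Ioo (0:ℝ) 1) :
      0 ≤ t ^ ((u ^ r)⁻¹ * r⁻¹) * (1 - (u ^ r)⁻¹ * log t) := by
    have : (u ^ r)⁻¹ * log t ≤ 0 :=
      mul_nonpos_of_nonneg_of_nonpos (inv_nonneg.2 (rpow_nonneg hu.1.le r)) (log_nonpos ht₀.le ht₁)
    exact mul_nonneg (rpow_nonneg ht₀.le _) (by linarith)
  have hcont := continuousOn_mul_rpow_inv_rpow ht₀ ht₁ hr
  have hint := intervalIntegral.integrableOn_deriv_of_nonneg hcont hderiv hnonneg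
  rw [← ofReal_integral_eq_lintegral_ofReal (hint.mono_set Ioo_subset_Ioc_self)
      ((ae_restrict_iff' measurableSet_Ioo).2 (ae_of_all _ hnonneg)),
    ← integral_Ioc_eq_integral_Ioo, ← intervalIntegral.integral_of_le zero_le_one,
    intervalIntegral.integral_eq_sub_of_hasDerivAt_of_le zero_le_one hcont hderiv
      ((intervalIntegrable_iff_integrableOn_Ioc_of_le zero_le_one).2 hint)]
  simp

namespace ProbabilityTheory

variable {Ω : Type*} [MeasurableSpace Ω] {P : Measure Ω}

lemma ae_mem_of_map_eq_restrict {α : Type*} [MeasurableSpace α] {μ : Measure α} {X : Ω → α}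
    {s : Set α} (hX : Measurable X) (hs : MeasurableSet s) (hlaw : P.map X = μ.restrict s) :
    ∀ᵐ ω ∂P, X ω ∈ s :=
  ae_of_ae_map hX.aemeasurable (hlaw ▸ ae_restrict_mem hs)

lemma IndepFun.measure_max_le {β : Type*} [LinearOrder β] [TopologicalSpace β]
    [OrderClosedTopology β] [MeasurableSpace β] [OpensMeasurableSpace β] {X Y : Ω → β}
    (hXY : IndepFun X Y P) (c : β) :
    P {ω | max (X ω) (Y ω) ≤ c} = P {ω | X ω ≤ c} * P {ω | Y ω ≤ c} := by
  simp only [max_le_iff, ofPred_and]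
  exact hXY.measure_inter_preimage_eq_mul _ _ measurableSet_Iic measurableSet_Iic

lemma iIndepFun.indepFun_prodMk₃ {ι β : Type*} [DecidableEq ι] [MeasurableSpace β]
    {f : ι → Ω → β} (h : iIndepFun f P) (hf : ∀ i, Measurable (f i)) (i j k l : ι)
    (hij : i ≠ j) (hik : i ≠ k) (hil : i ≠ l) :
    IndepFun (f i) (fun ω => (f j ω, f k ω, f l ω)) P := by
  let S : Finset ι := {j, k, l}
  have hS := h.indepFun_finset {i} S (by simp [S, hij, hik, hil]) hf
  exact hS.comp (measurable_pi_apply (⟨i, by simp⟩ : ({i} : Finset ι)))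
    ((measurable_pi_apply (⟨j, by simp [S]⟩ : S)).prodMk
      ((measurable_pi_apply (⟨k, by simp [S]⟩ : S)).prodMk
        (measurable_pi_apply (⟨l, by simp [S]⟩ : S))))

lemma IndepFun.measure_rpow_le [IsFiniteMeasure P] {T A : Ω → ℝ} {t : ℝ}
    (hTA : IndepFun T A P) (hT : Measurable T) (hA : Measurable A) (hT₀ : ∀ᵐ ω ∂P, 0 < T ω)
    (hA₀ : ∀ᵐ ω ∂P, 0 ≤ A ω) (ht : 0 ≤ t) :
    P {ω | A ω ^ T ω ≤ t} = ∫⁻ τ, P {ω | A ω ≤ t ^ τ⁻¹} ∂P.map T := by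
  have hS : MeasurableSet {q : ℝ × ℝ | q.2 ^ q.1 ≤ t} :=
    measurableSet_le (by fun_prop) measurable_const
  have hT₀' : ∀ᵐ τ ∂P.map T, 0 < τ := (ae_map_iff hT.aemeasurable measurableSet_Ioi).2 hT₀
  have hA₀' : ∀ᵐ a ∂P.map A, 0 ≤ a := (ae_map_iff hA.aemeasurable measurableSet_Ici).2 hA₀
  calc P {ω | A ω ^ T ω ≤ t} = P.map (fun ω => (T ω, A ω)) {q | q.2 ^ q.1 ≤ t} :=
        (Measure.map_apply (hT.prodMk hA) hS).symm
    _ = ∫⁻ τ, P.map A {a | a ^ τ ≤ t} ∂P.map T := by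
        rw [hTA.map_prod_eq_prod_map_map hT.aemeasurable hA.aemeasurable, Measure.prod_apply hS]
        rfl
    _ = ∫⁻ τ, P.map A (Iic (t ^ τ⁻¹)) ∂P.map T := by
        refine lintegral_congr_ae (hT₀'.mono fun τ hτ => measure_congr ?_)
        exact hA₀'.mono fun a ha => propext (le_rpow_inv_iff_of_pos ha ht hτ).symm
    _ = _ := by simp only [Measure.map_apply hA measurableSet_Iic]; rfl

lemma measure_rpow_le_of_map_eq {V : Ω → ℝ} {s c : ℝ} (hV : Measurable V)
    (hlaw : P.map V = volume.restrict (Ioo 0 1)) (hs : 0 < s) (hc₀ : 0 ≤ c) (hc₁ : c < 1) :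
    P {ω | V ω ^ s ≤ c} = ENNReal.ofReal (c ^ s⁻¹) := by
  have hS : MeasurableSet {v : ℝ | v ^ s ≤ c} := measurableSet_le (by fun_prop) measurable_const
  have hset : {v : ℝ | v ^ s ≤ c} ∩ Ioo 0 1 = Ioc 0 (c ^ s⁻¹) := by
    ext v
    simp only [mem_inter_iff, mem_ofPred_eq, mem_Ioo, mem_Ioc]
    constructor
    · rintro ⟨hvc, hv₀, -⟩
      exact ⟨hv₀, (le_rpow_inv_iff_of_pos hv₀.le hc₀ hs).2 hvc⟩
    · rintro ⟨hv₀, hvc⟩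
      exact ⟨(le_rpow_inv_iff_of_pos hv₀.le hc₀ hs).1 hvc, hv₀,
        hvc.trans_lt (rpow_lt_one hc₀ hc₁ (inv_pos.2 hs))⟩
  calc P {ω | V ω ^ s ≤ c} = P.map V {v | v ^ s ≤ c} := (Measure.map_apply hV hS).symm
    _ = _ := by rw [hlaw, Measure.restrict_apply hS, hset, volume_Ioc, sub_zero]

lemma IndepFun.measure_mul_le_of_map_eq [IsFiniteMeasure P] {V W : Ω → ℝ} {c : ℝ}
    (hVW : IndepFun V W P) (hV : Measurable V) (hW : Measurable W)
    (hVlaw : P.map V = volume.restrict (Ioo 0 1)) (hWlaw : P.map W = volume.restrict (Ioo 0 1))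
    (hc₀ : 0 < c) (hc₁ : c ≤ 1) :
    P {ω | V ω * W ω ≤ c} = ENNReal.ofReal (c - c * log c) := by
  have hS : MeasurableSet {q : ℝ × ℝ | q.1 * q.2 ≤ c} :=
    measurableSet_le (by fun_prop) measurable_const
  calc P {ω | V ω * W ω ≤ c} = P.map (fun ω => (V ω, W ω)) {q | q.1 * q.2 ≤ c} :=
        (Measure.map_apply (hV.prodMk hW) hS).symm
    _ = ∫⁻ x in Ioo 0 1, volume.restrict (Ioo 0 1) {y | x * y ≤ c} := by
        rw [hVW.map_prod_eq_prod_map_map hV.aemeasurable hW.aemeasurable, hVlaw, hWlaw,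
          Measure.prod_apply hS]
        rfl
    _ = ∫⁻ x in Ioo 0 1, ENNReal.ofReal (min (c / x) 1) :=
        setLIntegral_congr_fun measurableSet_Ioo fun x hx => volume_restrict_Ioo_mul_le c hx.1
    _ = _ := lintegral_Ioo_min_div_one hc₀ hc₁

lemma measure_max_rpow_mul_le [IsFiniteMeasure P] {V₁ V₂ V₃ : Ω → ℝ} {s c : ℝ}
    (hV₁ : Measurable V₁) (hV₂ : Measurable V₂) (hV₃ : Measurable V₃)
    (h₁ : IndepFun V₁ (fun ω => (V₂ ω, V₃ ω)) P) (h₂₃ : IndepFun V₂ V₃ P)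
    (hV₁law : P.map V₁ = volume.restrict (Ioo 0 1))
    (hV₂law : P.map V₂ = volume.restrict (Ioo 0 1))
    (hV₃law : P.map V₃ = volume.restrict (Ioo 0 1)) (hs : 0 < s) (hc : c ∈ Ioo (0:ℝ) 1) :
    P {ω | max (V₁ ω ^ s) (V₂ ω * V₃ ω) ≤ c} =
      ENNReal.ofReal (c ^ (s⁻¹ + 1) * (1 - log c)) := by
  have hX : IndepFun (fun ω => V₁ ω ^ s) (fun ω => V₂ ω * V₃ ω) P :=
    h₁.comp (φ := fun x => x ^ s) (ψ := fun q : ℝ × ℝ => q.1 * q.2) (by fun_prop) (by fun_prop)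
  rw [hX.measure_max_le c,
    measure_rpow_le_of_map_eq hV₁ hV₁law hs hc.1.le hc.2,
    h₂₃.measure_mul_le_of_map_eq hV₂ hV₃ hV₂law hV₃law hc.1 hc.2.le,
    ← ENNReal.ofReal_mul (rpow_nonneg hc.1.le _), rpow_add hc.1, rpow_one]
  congr 1
  ring

lemma measure_rpow_rpow_le [IsFiniteMeasure P] {U A : Ω → ℝ} {r t : ℝ} (hU : Measurable U)
    (hA : Measurable A) (hUA : IndepFun U A P) (hUlaw : P.map U = volume.restrict (Ioo 0 1))
    (hA₀ : ∀ᵐ ω ∂P, 0 ≤ A ω)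
    (hcdf : ∀ c ∈ Ioo (0:ℝ) 1, P {ω | A ω ≤ c} = ENNReal.ofReal (c ^ r⁻¹ * (1 - log c)))
    (hr : 0 < r) (ht : t ∈ Ioo (0:ℝ) 1) :
    P {ω | A ω ^ U ω ^ r ≤ t} = ENNReal.ofReal (t ^ r⁻¹) := by
  have hT₀ : ∀ᵐ ω ∂P, 0 < U ω ^ r :=
    (ae_mem_of_map_eq_restrict hU measurableSet_Ioo hUlaw).mono fun ω h => rpow_pos_of_pos h.1 r
  have hmono : Monotone fun x => P {ω | A ω ≤ x} := fun x y hxy =>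
    measure_mono fun ω h => le_trans h hxy
  have hcdf_meas : Measurable fun τ : ℝ => P {ω | A ω ≤ t ^ τ⁻¹} :=
    hmono.measurable.comp (by fun_prop)
  have hTlaw : P.map (fun ω => U ω ^ r) = (volume.restrict (Ioo 0 1)).map (· ^ r) := by
    rw [← hUlaw, Measure.map_map (by fun_prop) hU]
    rfl
  have hTA : IndepFun (fun ω => U ω ^ r) A P :=
    hUA.comp (φ := fun x => x ^ r) (ψ := id) (by fun_prop) measurable_id
  rw [hTA.measure_rpow_le (hU.pow_const r) hA hT₀ hA₀ ht.1.le, hTlaw,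
    lintegral_map hcdf_meas (by fun_prop)]
  calc ∫⁻ u in Ioo (0:ℝ) 1, P {ω | A ω ≤ t ^ (u ^ r)⁻¹} =
        ∫⁻ u in Ioo 0 1, ENNReal.ofReal (t ^ ((u ^ r)⁻¹ * r⁻¹) * (1 - (u ^ r)⁻¹ * log t)) := by
        refine setLIntegral_congr_fun measurableSet_Ioo fun u hu => ?_
        have hτ : 0 < (u ^ r)⁻¹ := inv_pos.2 (rpow_pos_of_pos hu.1 r)
        rw [hcdf _ ⟨rpow_pos_of_pos ht.1 _, rpow_lt_one ht.1.le ht.2 hτ⟩, ← rpow_mul ht.1.le,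
          log_rpow ht.1]
    _ = _ := lintegral_Ioo_rpow_inv_rpow ht.1 ht.2.le hr

lemma map_rpow_rpow_eq_map_rpow [IsProbabilityMeasure P] {U A : Ω → ℝ} {r : ℝ}
    (hU : Measurable U) (hA : Measurable A) (hUA : IndepFun U A P)
    (hUlaw : P.map U = volume.restrict (Ioo 0 1)) (hA₀₁ : ∀ᵐ ω ∂P, A ω ∈ Ioo (0:ℝ) 1)
    (hcdf : ∀ c ∈ Ioo (0:ℝ) 1, P {ω | A ω ≤ c} = ENNReal.ofReal (c ^ r⁻¹ * (1 - log c)))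
    (hr : 0 < r) :
    P.map (fun ω => A ω ^ U ω ^ r) = P.map (fun ω => U ω ^ r) := by
  have hT₀₁ : ∀ᵐ ω ∂P, U ω ^ r ∈ Ioo (0:ℝ) 1 :=
    (ae_mem_of_map_eq_restrict hU measurableSet_Ioo hUlaw).mono fun ω h =>
      ⟨rpow_pos_of_pos h.1 r, rpow_lt_one h.1.le h.2 hr⟩
  have hT : Measurable fun ω => U ω ^ r := hU.pow_const r
  have hAT : Measurable fun ω => A ω ^ U ω ^ r := hA.pow hT
  have := Measure.isProbabilityMeasure_map (μ := P) hAT.aemeasurable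
  have := Measure.isProbabilityMeasure_map (μ := P) hT.aemeasurable
  refine Measure.ext_of_Iic_of_ae_mem_Ioo (a := 0) (b := 1) ?_
    ((ae_map_iff hT.aemeasurable measurableSet_Ioo).2 hT₀₁) fun t ht => ?_
  · refine (ae_map_iff hAT.aemeasurable measurableSet_Ioo).2 ?_
    filter_upwards [hA₀₁, hT₀₁] with ω hA hT
    exact ⟨rpow_pos_of_pos hA.1 _, rpow_lt_one hA.1.le hA.2 hT.1⟩
  rw [Measure.map_apply hAT measurableSet_Iic, Measure.map_apply hT measurableSet_Iic]
  exact (measure_rpow_rpow_le hU hA hUA hUlaw (hA₀₁.mono fun ω h => h.1.le) hcdf hr ht).trans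
    (measure_rpow_le_of_map_eq hU hUlaw hr ht.1.le ht.2).symm

end ProbabilityTheory

theorem stmt_19 {Ω : Type*} [MeasurableSpace Ω] (P : Measure Ω) [IsProbabilityMeasure P]
    (r : ℝ) (hr : r ∈ Set.Ioo (0 : ℝ) 1)
    (U V₁ V₂ V₃ : Ω → ℝ)
    (hU : Measurable U) (hV₁ : Measurable V₁) (hV₂ : Measurable V₂) (hV₃ : Measurable V₃)
    (hindep : iIndepFun ![U, V₁, V₂, V₃] P)
    (hUunif : Measure.map U P = volume.restrict (Set.Ioo (0 : ℝ) 1))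
    (hV₁unif : Measure.map V₁ P = volume.restrict (Set.Ioo (0 : ℝ) 1))
    (hV₂unif : Measure.map V₂ P = volume.restrict (Set.Ioo (0 : ℝ) 1))
    (hV₃unif : Measure.map V₃ P = volume.restrict (Set.Ioo (0 : ℝ) 1)) :
    Measure.map
        (fun ω => (max (V₁ ω ^ (r / (1 - r))) (V₂ ω * V₃ ω)) ^ (U ω ^ r)) P =
      Measure.map (fun ω => U ω ^ r) P := by
  obtain ⟨hr₀, hr₁⟩ := hr
  have hp : 0 < r / (1 - r) := div_pos hr₀ (sub_pos.2 hr₁)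
  set A := fun ω => max (V₁ ω ^ (r / (1 - r))) (V₂ ω * V₃ ω)
  have hmeas (i : Fin 4) : Measurable (![U, V₁, V₂, V₃] i) := by fin_cases i <;> assumption
  have hUA : IndepFun U A P :=
    (hindep.indepFun_prodMk₃ hmeas 0 1 2 3 (by decide) (by decide) (by decide)).comp (φ := id)
      (ψ := fun v : ℝ × ℝ × ℝ => max (v.1 ^ (r / (1 - r))) (v.2.1 * v.2.2)) measurable_id
      (by fun_prop)
  have hA₀₁ : ∀ᵐ ω ∂P, A ω ∈ Ioo (0:ℝ) 1 := by
    filter_upwards [ae_mem_of_map_eq_restrict hV₁ measurableSet_Ioo hV₁unif,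
      ae_mem_of_map_eq_restrict hV₂ measurableSet_Ioo hV₂unif,
      ae_mem_of_map_eq_restrict hV₃ measurableSet_Ioo hV₃unif] with ω h₁ h₂ h₃
    exact ⟨lt_max_of_lt_left (rpow_pos_of_pos h₁.1 _), max_lt (rpow_lt_one h₁.1.le h₁.2 hp)
      (mul_lt_one_of_nonneg_of_lt_one_left h₂.1.le h₂.2 h₃.2.le)⟩
  have hcdfA (c : ℝ) (hc : c ∈ Ioo (0:ℝ) 1) :
      P {ω | A ω ≤ c} = ENNReal.ofReal (c ^ r⁻¹ * (1 - log c)) := by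
    have hexp : (r / (1 - r))⁻¹ + 1 = r⁻¹ := by field_simp; ring
    rw [← hexp]
    exact measure_max_rpow_mul_le hV₁ hV₂ hV₃
      (hindep.indepFun_prodMk hmeas 2 3 1 (by decide) (by decide)).symm
      (hindep.indepFun (show (2 : Fin 4) ≠ 3 by decide)) hV₁unif hV₂unif hV₃unif hp hc
  exact map_rpow_rpow_eq_map_rpow hU (by fun_prop) hUA hUunif hA₀₁ hcdfA hr₀
end
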